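/- Let f : ℂ → ℂ be an entire function, p ∈ ℂ, and k ≥ 2 an integer such that the derivative f' has a zero of order exactly k − 1 at p (i.e., the j-th derivative f^{(j)}(p) = 0 for 1 ≤ j ≤ k − 1 and f^{(k)}(p) ≠ 0; equivalently, f has a critical point of local degree k at p). Then (z − p)²·S_f(z) → (1 − k²)/2 as z → p (through points z near p with f'(z) ≠ 0). In particular, the Schwarzian derivative S_f dz² has a pole of order exactly two at p with leading coefficient (1 − k²)/2. -/

import Mathlib

open Filter Topology MeasureTheory Set

/-- The Schwarzian derivative of a holomorphic function. -/
noncomputable def schwarzian (F : ℂ → ℂ) (z : ℂ) : ℂ :=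
  iteratedDeriv 3 F z / deriv F z - (3/2) * (iteratedDeriv 2 F z / deriv F z)^2

/-- The union of all backward orbits of the critical points:
`Precrit(f) = {c : (f^n)'(c) = 0 for some n ≥ 1}`. -/
def precrit (f : ℂ → ℂ) : Set ℂ :=
  {c : ℂ | ∃ n : ℕ, 1 ≤ n ∧ deriv (f^[n]) c = 0}

/-- The basin of infinity of `f`. -/
def basinInf (f : ℂ → ℂ) : Set ℂ :=
  {z : ℂ | Tendsto (fun n : ℕ => ‖f^[n] z‖) atTop atTop}

/-- `f` is affinely conjugate to `z ↦ z ^ d`. -/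
def conjToPow (f : ℂ → ℂ) (d : ℕ) : Prop :=
  ∃ a b : ℂ, a ≠ 0 ∧ ∀ z : ℂ, f (a * z + b) = a * z ^ d + b

/-!
Write `f' = (z - p)^m g` near `p` with `m = k - 1` and `g p ≠ 0`. Then `(z - p) f'' = A f'`
for the analytic function `A = m + (z - p) g'/g`, with `A p = m`. Differentiating this relation
gives `(z - p)² f'''/f'` in terms of `A`, and the Schwarzian becomes
`(z - p)² S_f = (z - p) A' - A - A²/2`, which tends to `-m - m²/2 = (1 - k²)/2`.
-/

lemma analyticOrderAt_deriv_eq_of_iteratedDeriv {𝕜 E : Type*} [NontriviallyNormedField 𝕜]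
    [CharZero 𝕜] [NormedAddCommGroup E] [NormedSpace 𝕜 E] [CompleteSpace E] {f : 𝕜 → E} {p : 𝕜}
    (hf : AnalyticAt 𝕜 f p) {m : ℕ} (hvanish : ∀ j, 1 ≤ j → j ≤ m → iteratedDeriv j f p = 0)
    (hne : iteratedDeriv (m + 1) f p ≠ 0) :
    analyticOrderAt (deriv f) p = m := by
  refine (analyticOrderAt_eq_nat_iff_iteratedDeriv_eq_zero hf.deriv).2 ⟨fun j hj => ?_, ?_⟩
  · rw [← iteratedDeriv_succ']
    exact hvanish (j + 1) (by omega) (by omega)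
  · rwa [← iteratedDeriv_succ']

lemma AnalyticAt.exists_sub_mul_deriv_eq_mul {𝕜 : Type*} [NontriviallyNormedField 𝕜]
    [CompleteSpace 𝕜] {F : 𝕜 → 𝕜} {p : 𝕜} (hF : AnalyticAt 𝕜 F p) {m : ℕ}
    (hm : analyticOrderAt F p = m) :
    ∃ A : 𝕜 → 𝕜, AnalyticAt 𝕜 A p ∧ A p = m ∧
      ∀ᶠ z in 𝓝 p, (z - p) * deriv F z = A z * F z := by
  obtain ⟨g, hg, hgp, hFg⟩ := hF.analyticOrderAt_eq_natCast.1 hm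
  refine ⟨fun z => m + (z - p) * deriv g z / g z, ?_, by simp, ?_⟩
  · exact analyticAt_const.add (((analyticAt_id.sub analyticAt_const).mul hg.deriv).div hg hgp)
  have hFg_eq : F =ᶠ[𝓝 p] fun z => (z - p) ^ m • g z := hFg
  filter_upwards [hFg, hFg_eq.deriv, hg.eventually_analyticAt,
    hg.continuousAt.eventually_ne hgp] with z hFz hF'z hgz hgz0
  have hpow : HasDerivAt (fun w => (w - p) ^ m) (m * (z - p) ^ (m - 1)) z := by
    simpa using ((hasDerivAt_id z).sub_const p).fun_pow m
  simp only [smul_eq_mul] at hFz hF'z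
  rw [hF'z, hFz, (hpow.fun_mul hgz.differentiableAt.hasDerivAt).deriv]
  rcases m with _ | m
  · field_simp
    simp
  · field_simp
    simp only [Nat.add_sub_cancel]
    push_cast
    ring

lemma schwarzian_eq_deriv (f : ℂ → ℂ) (z : ℂ) :
    schwarzian f z = deriv (deriv (deriv f)) z / deriv f z
      - 3 / 2 * (deriv (deriv f) z / deriv f z) ^ 2 := by
  simp only [schwarzian, iteratedDeriv_eq_iterate, Function.iterate_succ_apply,
    Function.iterate_zero_apply]

lemma sq_mul_schwarzian_eq {f : ℂ → ℂ} {p z a a' : ℂ} (hz : deriv f z ≠ 0)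
    (h1 : (z - p) * deriv (deriv f) z = a * deriv f z)
    (h2 : deriv (deriv f) z + (z - p) * deriv (deriv (deriv f)) z
      = a' * deriv f z + a * deriv (deriv f) z) :
    (z - p) ^ 2 * schwarzian f z = (z - p) * a' - a - a ^ 2 / 2 := by
  rw [schwarzian_eq_deriv]
  field_simp
  linear_combination (2 * (z - p) * deriv f z) * h2
    - (3 * (z - p) * deriv (deriv f) z + (a + 2) * deriv f z) * h1

lemma tendsto_sq_mul_schwarzian {f A : ℂ → ℂ} {p : ℂ} (hf : AnalyticAt ℂ f p)
    (hA : AnalyticAt ℂ A p)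
    (hfA : ∀ᶠ z in 𝓝 p, (z - p) * deriv (deriv f) z = A z * deriv f z) :
    Tendsto (fun z => (z - p) ^ 2 * schwarzian f z) (𝓝[{z | deriv f z ≠ 0}] p)
      (𝓝 (-A p - A p ^ 2 / 2)) := by
  have hlim : Tendsto (fun z => (z - p) * deriv A z - A z - A z ^ 2 / 2) (𝓝 p)
      (𝓝 (-A p - A p ^ 2 / 2)) := by
    have hcont : ContinuousAt (fun z => (z - p) * deriv A z - A z - A z ^ 2 / 2) p :=
      (((continuousAt_id.sub continuousAt_const).mul hA.deriv.continuousAt).sub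
        hA.continuousAt).sub ((hA.continuousAt.pow 2).div_const 2)
    simpa using hcont.tendsto
  have hfA' : ∀ᶠ z in 𝓝 p, deriv (deriv f) z + (z - p) * deriv (deriv (deriv f)) z
      = deriv A z * deriv f z + A z * deriv (deriv f) z := by
    have hfA_eq : (fun z => (z - p) * deriv (deriv f) z) =ᶠ[𝓝 p]
        fun z => A z * deriv f z := hfA
    filter_upwards [hfA_eq.deriv, hf.eventually_analyticAt, hA.eventually_analyticAt]
      with z hz hfz hAz
    rwa [(((hasDerivAt_id' z).sub_const p).fun_mul
        hfz.deriv.deriv.differentiableAt.hasDerivAt).deriv,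
      (hAz.differentiableAt.hasDerivAt.fun_mul hfz.deriv.differentiableAt.hasDerivAt).deriv,
      one_mul] at hz
  refine (hlim.mono_left nhdsWithin_le_nhds).congr' ?_
  filter_upwards [nhdsWithin_le_nhds hfA, nhdsWithin_le_nhds hfA', self_mem_nhdsWithin]
    with z h1 h2 hz
  exact (sq_mul_schwarzian_eq hz h1 h2).symm

/-- At a critical point `p` of local degree `k` of an entire function
`f`, the Schwarzian derivative has a double pole with leading coefficient `(1 - k²)/2`:
`(z - p)² S_f(z) → (1 - k²)/2` as `z → p` through points with `f'(z) ≠ 0`. -/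
theorem stmt11 (f : ℂ → ℂ) (hf : Differentiable ℂ f) (p : ℂ) (k : ℕ) (hk : 2 ≤ k)
    (hvanish : ∀ j : ℕ, 1 ≤ j → j ≤ k - 1 → iteratedDeriv j f p = 0)
    (hknz : iteratedDeriv k f p ≠ 0) :
    Tendsto (fun z : ℂ => (z - p) ^ 2 * schwarzian f z)
      (𝓝[{z : ℂ | z ≠ p ∧ deriv f z ≠ 0}] p)
      (𝓝 ((1 - (k : ℂ) ^ 2) / 2)) := by
  obtain ⟨m, rfl⟩ : ∃ m, k = m + 1 := ⟨k - 1, by omega⟩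
  have hfp : AnalyticAt ℂ f p := hf.analyticAt p
  have horder : analyticOrderAt (deriv f) p = m :=
    analyticOrderAt_deriv_eq_of_iteratedDeriv hfp (fun j hj hjm => hvanish j hj (by omega)) hknz
  obtain ⟨A, hA, hAp, hfA⟩ := hfp.deriv.exists_sub_mul_deriv_eq_mul horder
  have hsub : {z : ℂ | z ≠ p ∧ deriv f z ≠ 0} ⊆ {z | deriv f z ≠ 0} := fun _ hz => hz.2
  convert (tendsto_sq_mul_schwarzian hfp hA hfA).mono_left (nhdsWithin_mono p hsub) using 2
  rw [hAp]
  push_cast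
  ring
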